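/- arXiv:2412.06199 — 3 statements merged into one kernel-verified Lean document; each statement's English description precedes it below -/
import Mathlib

section
/- Let p be an odd prime and q = p^r with r ≥ 1. Let a,b,c,d,e,f ∈ F_q^× be such that a·f = c·e, c² = −4ab, and ab = de. Then #C_{a,b,c,d,e,f}(F_q) = 2q − 2 + (q−1)·φ(ad) if q ≡ 1 (mod 4), and #C_{a,b,c,d,e,f}(F_q) = 2q − 2 − (q−1)·φ(ad) if q ≡ 3 (mod 4). -/
open Finset

lemma aux_left {F : Type} [Fintype F] [DecidableEq F] (pred : F × F → Prop) [DecidablePred pred] :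
    (Finset.univ.filter pred).card = ∑ x : F, (Finset.univ.filter fun y => pred (x, y)).card := by
  simp only [Finset.card_filter, Fintype.sum_prod_type]

lemma aux_right {F : Type} [Fintype F] [DecidableEq F] (pred : F × F → Prop) [DecidablePred pred] :
    (Finset.univ.filter pred).card = ∑ y : F, (Finset.univ.filter fun x => pred (x, y)).card := by
  simp only [Finset.card_filter, Fintype.sum_prod_type_right]

/-- For `a,b,c,d,e,f ∈ F_q^×` with `a·f = c·e`, `c² = −4ab`, `ab = de`,
the number of affine points on `C_{a,b,c,d,e,f}` is `2q−2+(q−1)φ(ad)` if `q ≡ 1 (mod 4)`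
and `2q−2−(q−1)φ(ad)` if `q ≡ 3 (mod 4)`. -/
theorem statement1 (p r : ℕ) (hp : p.Prime) (hodd : Odd p) (hr : 0 < r)
    (F : Type) [Field F] [Fintype F] [DecidableEq F]
    (hcard : Fintype.card F = p ^ r)
    (a b c d e f : F) (ha : a ≠ 0) (hb : b ≠ 0) (hc : c ≠ 0) (hd : d ≠ 0)
    (he : e ≠ 0) (hf : f ≠ 0)
    (hafce : a * f = c * e) (hc2 : c ^ 2 = -(4 * a * b)) (habde : a * b = d * e) :
    (Fintype.card F % 4 = 1 →
      ((Finset.univ.filter fun xy : F × F =>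
          a * xy.2 ^ 2 + b * xy.1 ^ 2 + c * xy.1 * xy.2
            = d + e * xy.1 ^ 2 * xy.2 ^ 2 + f * xy.1 ^ 3 * xy.2).card : ℤ)
        = 2 * (Fintype.card F : ℤ) - 2
            + ((Fintype.card F : ℤ) - 1) * quadraticChar F (a * d))
    ∧ (Fintype.card F % 4 = 3 →
      ((Finset.univ.filter fun xy : F × F =>
          a * xy.2 ^ 2 + b * xy.1 ^ 2 + c * xy.1 * xy.2
            = d + e * xy.1 ^ 2 * xy.2 ^ 2 + f * xy.1 ^ 3 * xy.2).card : ℤ)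
        = 2 * (Fintype.card F : ℤ) - 2
            - ((Fintype.card F : ℤ) - 1) * quadraticChar F (a * d)) := by
  -- basic facts
  have hoddcard : Fintype.card F % 2 = 1 := by
    rw [hcard, Nat.odd_iff.mp (hodd.pow)]
  have hF2 : ringChar F ≠ 2 := by
    intro h
    rw [FiniteField.even_card_iff_char_two] at h
    omega
  have h2 : (2 : F) ≠ 0 := Ring.two_ne_zero hF2
  have h2a : (2 : F) * a ≠ 0 := mul_ne_zero h2 ha
  have hdf : d * f = c * b := by
    apply mul_left_cancel₀ ha
    linear_combination d * hafce - c * habde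
  -- the factorization identity
  have factid : ∀ x y : F, (b * x ^ 2 - d) * (a * y ^ 2 + c * x * y - d)
      = -d * ((a * y ^ 2 + b * x ^ 2 + c * x * y)
        - (d + e * x ^ 2 * y ^ 2 + f * x ^ 3 * y)) := by
    intro x y
    linear_combination x ^ 2 * y ^ 2 * habde - x ^ 3 * y * hdf
  have key : ∀ x y : F, (a * y ^ 2 + b * x ^ 2 + c * x * y
      = d + e * x ^ 2 * y ^ 2 + f * x ^ 3 * y)
      ↔ (b * x ^ 2 - d = 0 ∨ a * y ^ 2 + c * x * y - d = 0) := by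
    intro x y
    rw [← mul_eq_zero]
    constructor
    · intro h
      rw [factid x y, sub_eq_zero.mpr h, mul_zero]
    · intro h
      rw [factid x y] at h
      rcases mul_eq_zero.mp h with h' | h'
      · exact absurd (neg_eq_zero.mp h') hd
      · exact sub_eq_zero.mp h'
  set q : ℤ := (Fintype.card F : ℤ) with hq
  set χ := quadraticChar F with hχ
  -- rewrite the filter
  have hfilter : (Finset.univ.filter fun xy : F × F =>
        a * xy.2 ^ 2 + b * xy.1 ^ 2 + c * xy.1 * xy.2
          = d + e * xy.1 ^ 2 * xy.2 ^ 2 + f * xy.1 ^ 3 * xy.2)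
      = (Finset.univ.filter fun xy : F × F => b * xy.1 ^ 2 - d = 0)
        ∪ (Finset.univ.filter fun xy : F × F =>
            a * xy.2 ^ 2 + c * xy.1 * xy.2 - d = 0) := by
    rw [← Finset.filter_or]
    exact Finset.filter_congr fun xy _ => by
      simpa using key xy.1 xy.2
  set A := Finset.univ.filter fun xy : F × F => b * xy.1 ^ 2 - d = 0 with hA
  set B := Finset.univ.filter fun xy : F × F =>
      a * xy.2 ^ 2 + c * xy.1 * xy.2 - d = 0 with hB
  set S := (Finset.univ.filter fun x : F => b * x ^ 2 - d = 0).card with hS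
  -- card A
  have cardA : A.card = S * Fintype.card F := by
    rw [hA, aux_left, hS, Finset.card_filter]
    rw [Finset.sum_mul]
    apply Finset.sum_congr rfl
    intro x _
    by_cases hx : b * x ^ 2 - d = 0
    · simp [hx, Finset.filter_true_of_mem]
    · simp [hx]
  -- card B
  have cardB : B.card = Fintype.card F - 1 := by
    rw [hB, aux_right]
    have hinner : ∀ y : F, (Finset.univ.filter fun x : F =>
        a * y ^ 2 + c * x * y - d = 0).card = if y = 0 then 0 else 1 := by
      intro y
      by_cases hy : y = 0
      · simp [hy, sub_eq_zero, hd, Ne.symm hd]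
      · have hcy : c * y ≠ 0 := mul_ne_zero hc hy
        have : ∀ x : F, (a * y ^ 2 + c * x * y - d = 0)
            ↔ x = (d - a * y ^ 2) / (c * y) := by
          intro x
          rw [eq_div_iff hcy]
          constructor <;> intro h <;> linear_combination h
        simp only [this, Finset.filter_eq', Finset.mem_univ, if_true,
          Finset.card_singleton, hy, if_false]
    rw [Finset.sum_congr rfl fun y _ => hinner y]
    have : (Finset.univ.filter fun y : F => ¬(y = 0)) = Finset.univ.erase 0 := by
      ext y; simp [Finset.mem_erase, and_comm]
    calc (∑ y : F, if y = 0 then 0 else 1)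
        = (Finset.univ.filter fun y : F => ¬(y = 0)).card := by
          rw [Finset.card_filter]
          exact Finset.sum_congr rfl fun y _ => by by_cases h : y = 0 <;> simp [h]
      _ = Fintype.card F - 1 := by
          rw [this, Finset.card_erase_of_mem (Finset.mem_univ _), Finset.card_univ]
  -- card A ∩ B
  have cardAB : (A ∩ B).card = S := by
    rw [hA, hB, ← Finset.filter_and, aux_left, hS, Finset.card_filter]
    apply Finset.sum_congr rfl
    intro x _
    by_cases hx : b * x ^ 2 - d = 0
    · have hkey : ∀ y : F, (b * x ^ 2 - d = 0 ∧ a * y ^ 2 + c * x * y - d = 0)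
          ↔ y = -(c * x) / (2 * a) := by
        intro y
        have hsq : (2 * a * y + c * x) ^ 2 = 4 * a * (a * y ^ 2 + c * x * y - d) := by
          linear_combination x ^ 2 * hc2 - 4 * a * hx
        constructor
        · rintro ⟨-, h⟩
          have hz : (2 * a * y + c * x) ^ 2 = 0 := by rw [hsq, h, mul_zero]
          have h0 : 2 * a * y + c * x = 0 :=
            pow_eq_zero_iff (n := 2) (by norm_num) |>.mp hz
          rw [eq_div_iff h2a]
          linear_combination h0
        · intro h
          refine ⟨hx, ?_⟩
          rw [eq_div_iff h2a] at h
          have h4a : (4 : F) * a ≠ 0 := by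
            have h4 : (4 : F) ≠ 0 := by
              have : (4 : F) = 2 * 2 := by norm_num
              rw [this]; exact mul_ne_zero h2 h2
            exact mul_ne_zero h4 ha
          apply mul_left_cancel₀ h4a
          rw [mul_zero, ← hsq]
          linear_combination (2 * a * y + c * x) * h
      rw [Finset.filter_congr fun y _ => hkey y, Finset.filter_eq']
      simp [hx]
    · simp [hx]
  -- value of S
  have hq1 : 1 ≤ Fintype.card F := Fintype.card_pos
  have hSset : (Finset.univ.filter fun x : F => b * x ^ 2 - d = 0)
      = {x : F | x ^ 2 = d / b}.toFinset := by
    ext x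
    simp [sub_eq_zero, eq_div_iff hb, mul_comm]
  have hdb : χ (d / b) = χ (b * d) := by
    have hbd' : (b * d : F) = d / b * b ^ 2 := by field_simp
    rw [hbd', map_mul, quadraticChar_sq_one' hb, mul_one]
  have hS' : (S : ℤ) = χ (b * d) + 1 := by
    rw [hS, hSset, ← hdb]
    exact_mod_cast quadraticChar_card_sqrts hF2 (d / b)
  -- character identities
  have hnegab : χ (-(a * b)) = 1 := by
    have h1 : (-(a * b) : F) = (c * (2 : F)⁻¹) ^ 2 := by
      field_simp
      linear_combination -hc2
    rw [h1]
    exact quadraticChar_sq_one' (mul_ne_zero hc (inv_ne_zero h2))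
  have hm : χ (-1) * χ (a * b) = 1 := by
    rw [← map_mul, neg_one_mul]; exact hnegab
  have hm1 : χ (-1) * χ (-1) = 1 := by
    rw [← map_mul, neg_mul_neg, one_mul, map_one]
  have hab : χ (a * b) = χ (-1) := by
    calc χ (a * b) = χ (-1) * (χ (-1) * χ (a * b)) := by rw [← mul_assoc, hm1, one_mul]
      _ = χ (-1) := by rw [hm, mul_one]
  have hA2 : χ a * χ a = 1 := by
    rw [← map_mul, ← sq]; exact quadraticChar_sq_one' ha
  have hbdad : χ (b * d) = χ (-1) * χ (a * d) := by
    rw [map_mul, map_mul, ← hab, map_mul]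
    linear_combination (-(χ b * χ d)) * hA2
  -- main count
  have hcount : ((Finset.univ.filter fun xy : F × F =>
        a * xy.2 ^ 2 + b * xy.1 ^ 2 + c * xy.1 * xy.2
          = d + e * xy.1 ^ 2 * xy.2 ^ 2 + f * xy.1 ^ 3 * xy.2).card : ℤ)
      = 2 * q - 2 + (q - 1) * (χ (-1) * χ (a * d)) := by
    have hunion := Finset.card_union_add_card_inter A B
    rw [cardA, cardB, cardAB] at hunion
    rw [hfilter]
    have e0 : ((A ∪ B).card : ℤ) = (S : ℤ) * q + (q - 1) - S := by
      have hn : (A ∪ B).card + S = S * Fintype.card F + (Fintype.card F - 1) := by omega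
      have hcast := congrArg (fun n : ℕ => (n : ℤ)) hn
      push_cast [Nat.cast_sub hq1] at hcast
      linarith
    rw [e0, hS', ← hbdad]
    ring
  have hneg1 : χ (-1) = ZMod.χ₄ (Fintype.card F) := quadraticChar_neg_one hF2
  constructor
  · intro h1
    rw [hcount]
    have : χ (-1) = 1 := by
      rw [hneg1, ZMod.χ₄_nat_eq_if_mod_four, if_neg (by omega), if_pos h1]
    rw [this]; ring
  · intro h3
    rw [hcount]
    have : χ (-1) = -1 := by
      rw [hneg1, ZMod.χ₄_nat_eq_if_mod_four, if_neg (by omega), if_neg (by omega)]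
    rw [this]; ring
end

section
/- Let p be an odd prime and q = p^r with r ≥ 1 be such that q ≡ 1 (mod 4). Let a,b,c,d,e,f ∈ F_q^× satisfy a·f = c·e, c² = 4ab, and ab = de. Then #C_{a,b,c,d,e,f}(F_q) = 2q − 3 + (q−2)·φ(ad) if q ≡ 1 (mod 8), and #C_{a,b,c,d,e,f}(F_q) = 2q − 1 + q·φ(ad) if q ≡ 5 (mod 8). -/
open Finset

lemma sq_card {F : Type} [Field F] [Fintype F] [DecidableEq F]
    (hchar : ringChar F ≠ 2) {v : F} (hv : v ≠ 0) :
    ((univ.filter fun z : F => z ^ 2 = v).card : ℤ) = 1 + quadraticChar F v := by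
  by_cases hsq : IsSquare v
  · obtain ⟨w, hw⟩ := hsq
    have hw0 : w ≠ 0 := by rintro rfl; exact hv (by simpa using hw)
    have hset : (univ.filter fun z : F => z ^ 2 = v) = {w, -w} := by
      ext z
      simp only [mem_filter, mem_univ, true_and, mem_insert, mem_singleton, hw, sq]
      exact mul_self_eq_mul_self_iff
    have hne : w ≠ -w := by
      intro h
      apply hw0
      have h2 : (2 : F) ≠ 0 := Ring.two_ne_zero hchar
      have : (2 : F) * w = 0 := by linear_combination h
      exact (mul_eq_zero.mp this).resolve_left h2
    rw [hset, card_insert_of_notMem (by simpa using hne), card_singleton,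
      (quadraticChar_one_iff_isSquare hv).mpr ⟨w, hw⟩]
    norm_num
  · have hset : (univ.filter fun z : F => z ^ 2 = v) = ∅ := by
      ext z
      simp only [mem_filter, mem_univ, true_and, notMem_empty, iff_false]
      intro h
      exact hsq ⟨z, by rw [← h]; ring⟩
    rw [hset, quadraticChar_neg_one_iff_not_isSquare.mpr hsq]
    norm_num

lemma card_filter_prod {F : Type} [Fintype F] [DecidableEq F]
    (Q : F × F → Prop) [DecidablePred Q] :
    (univ.filter Q).card = ∑ x : F, (univ.filter fun y => Q (x, y)).card := by
  rw [Finset.card_filter, Fintype.sum_prod_type]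
  congr 1
  ext x
  rw [Finset.card_filter]

/-- Suppose `q ≡ 1 (mod 4)` and `a,b,c,d,e,f ∈ F_q^×` satisfy `a·f = c·e`,
`c² = 4ab`, `ab = de`. Then `#C = 2q−3+(q−2)φ(ad)` if `q ≡ 1 (mod 8)` and
`#C = 2q−1+q·φ(ad)` if `q ≡ 5 (mod 8)`. -/
theorem statement6 (p r : ℕ) (hp : p.Prime) (hodd : Odd p) (hr : 0 < r)
    (F : Type) [Field F] [Fintype F] [DecidableEq F]
    (hcard : Fintype.card F = p ^ r) (hq4 : Fintype.card F % 4 = 1)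
    (a b c d e f : F) (ha : a ≠ 0) (hb : b ≠ 0) (hc : c ≠ 0) (hd : d ≠ 0)
    (he : e ≠ 0) (hf : f ≠ 0)
    (hafce : a * f = c * e) (hc2 : c ^ 2 = 4 * a * b) (habde : a * b = d * e) :
    (Fintype.card F % 8 = 1 →
      ((Finset.univ.filter fun xy : F × F =>
          a * xy.2 ^ 2 + b * xy.1 ^ 2 + c * xy.1 * xy.2
            = d + e * xy.1 ^ 2 * xy.2 ^ 2 + f * xy.1 ^ 3 * xy.2).card : ℤ)
        = 2 * (Fintype.card F : ℤ) - 3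
            + ((Fintype.card F : ℤ) - 2) * quadraticChar F (a * d))
    ∧ (Fintype.card F % 8 = 5 →
      ((Finset.univ.filter fun xy : F × F =>
          a * xy.2 ^ 2 + b * xy.1 ^ 2 + c * xy.1 * xy.2
            = d + e * xy.1 ^ 2 * xy.2 ^ 2 + f * xy.1 ^ 3 * xy.2).card : ℤ)
        = 2 * (Fintype.card F : ℤ) - 1
            + (Fintype.card F : ℤ) * quadraticChar F (a * d)) := by
  have hchar : ringChar F ≠ 2 := by
    intro h
    have := FiniteField.even_card_iff_char_two.mp h
    omega
  have h2 : (2 : F) ≠ 0 := Ring.two_ne_zero hchar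
  have had : a * d ≠ 0 := mul_ne_zero ha hd
  have hab : a * b ≠ 0 := mul_ne_zero ha hb
  -- factorization identity
  have factored : ∀ x y : F,
      a * (a * y ^ 2 + b * x ^ 2 + c * x * y - (d + e * x ^ 2 * y ^ 2 + f * x ^ 3 * y))
        = (a - e * x ^ 2) * (a * y ^ 2 + c * x * y - d) := by
    intro x y
    linear_combination (-(x ^ 3 * y)) * hafce + x ^ 2 * habde
  have key : ∀ x y : F,
      (a * y ^ 2 + b * x ^ 2 + c * x * y = d + e * x ^ 2 * y ^ 2 + f * x ^ 3 * y)
        ↔ (e * x ^ 2 = a ∨ a * y ^ 2 + c * x * y = d) := by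
    intro x y
    constructor
    · intro h
      have h0 : (a - e * x ^ 2) * (a * y ^ 2 + c * x * y - d) = 0 := by
        rw [← factored x y, h]; ring
      rcases mul_eq_zero.mp h0 with h1 | h1
      · exact Or.inl (sub_eq_zero.mp h1).symm
      · exact Or.inr (sub_eq_zero.mp h1)
    · intro h
      have h0 : (a - e * x ^ 2) * (a * y ^ 2 + c * x * y - d) = 0 := by
        rcases h with h | h
        · rw [h]; ring
        · rw [h]; ring
      have h1 := (factored x y).trans h0
      have h2' := (mul_eq_zero.mp h1).resolve_left ha
      linear_combination h2'
  set T1 : Finset (F × F) := univ.filter fun xy : F × F => e * xy.1 ^ 2 = a with hT1def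
  set T2 : Finset (F × F) := univ.filter fun xy : F × F => a * xy.2 ^ 2 + c * xy.1 * xy.2 = d
    with hT2def
  have hsplit : (Finset.univ.filter fun xy : F × F =>
      a * xy.2 ^ 2 + b * xy.1 ^ 2 + c * xy.1 * xy.2
        = d + e * xy.1 ^ 2 * xy.2 ^ 2 + f * xy.1 ^ 3 * xy.2) = T1 ∪ T2 := by
    rw [hT1def, hT2def, ← filter_or]
    apply filter_congr
    intro xy _
    exact key xy.1 xy.2
  -- X : solutions of e x^2 = a
  set X : Finset F := univ.filter fun x : F => x ^ 2 = a * e⁻¹ with hXdef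
  have hXalt : (univ.filter fun x : F => e * x ^ 2 = a) = X := by
    rw [hXdef]
    apply filter_congr
    intro x _
    rw [eq_mul_inv_iff_mul_eq₀ he, mul_comm]
  -- T1 card
  have hT1card : T1.card = X.card * Fintype.card F := by
    have : T1 = X ×ˢ univ := by
      ext ⟨x, y⟩
      simp only [hT1def, mem_filter, mem_univ, true_and, Finset.mem_product, hXdef, and_true]
      rw [eq_mul_inv_iff_mul_eq₀ he, mul_comm]
    rw [this, Finset.card_product, Finset.card_univ]
  -- T2 card
  have hT2card : (T2.card : ℤ) = (Fintype.card F : ℤ) - 1 := by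
    have himg : T2 = (univ.erase (0 : F)).image fun y => ((d - a * y ^ 2) * (c * y)⁻¹, y) := by
      ext ⟨x, y⟩
      simp only [hT2def, mem_filter, mem_univ, true_and, Finset.mem_image, mem_erase]
      constructor
      · intro h
        have hy : y ≠ 0 := by
          rintro rfl
          apply hd
          linear_combination -h
        refine ⟨y, ⟨hy, trivial⟩, ?_⟩
        have hcy : c * y ≠ 0 := mul_ne_zero hc hy
        refine Prod.ext ?_ rfl
        field_simp
        linear_combination -h
      · rintro ⟨y', ⟨hy', -⟩, hE⟩
        obtain ⟨hx, hy⟩ := Prod.mk.injEq _ _ _ _ ▸ hE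
        subst hy
        have hcy : c * y' ≠ 0 := mul_ne_zero hc hy'
        rw [← hx]
        field_simp
        ring
    rw [himg, Finset.card_image_of_injective _ (fun y1 y2 h => (Prod.mk.injEq _ _ _ _ ▸ h).2),
      Finset.card_erase_of_mem (mem_univ 0), Finset.card_univ]
    have : 0 < Fintype.card F := Fintype.card_pos
    push_cast [Nat.cast_sub (by omega : 1 ≤ Fintype.card F)]
    ring
  -- intersection card
  set M : Finset F := univ.filter fun z : F => z ^ 2 = 8 * (a * d) with hMdef
  have hcapcard : (T1 ∩ T2).card = X.card * M.card := by
    have hfa : T1 ∩ T2 = univ.filter fun xy : F × F =>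
        e * xy.1 ^ 2 = a ∧ a * xy.2 ^ 2 + c * xy.1 * xy.2 = d := by
      rw [hT1def, hT2def, ← filter_and]
    rw [hfa, card_filter_prod]
    have hfib : ∀ x : F,
        (univ.filter fun y : F => e * x ^ 2 = a ∧ a * y ^ 2 + c * x * y = d).card
          = if e * x ^ 2 = a then M.card else 0 := by
      intro x
      by_cases hx : e * x ^ 2 = a
      · rw [if_pos hx]
        have hbx : b * x ^ 2 = d := by
          apply mul_left_cancel₀ he
          linear_combination b * hx + habde
        apply Finset.card_bij' (fun y _ => 2 * a * y + c * x)
          (fun z _ => (z - c * x) * (2 * a)⁻¹)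
        · intro y hy
          simp only [mem_filter, mem_univ, true_and, hx, true_and] at hy
          simp only [hMdef, mem_filter, mem_univ, true_and]
          linear_combination 4 * a * hy + x ^ 2 * hc2 + 4 * a * hbx
        · intro z hz
          simp only [hMdef, mem_filter, mem_univ, true_and] at hz
          simp only [mem_filter, mem_univ, true_and, hx, true_and]
          have h2a : (2 : F) * a ≠ 0 := mul_ne_zero h2 ha
          field_simp
          linear_combination hz - x ^ 2 * hc2 - 4 * a * hbx
        · intro y _
          have h2a : (2 : F) * a ≠ 0 := mul_ne_zero h2 ha
          field_simp
          ring
        · intro z _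
          have h2a : (2 : F) * a ≠ 0 := mul_ne_zero h2 ha
          field_simp
          ring
      · rw [if_neg hx]
        simp [hx]
    rw [Finset.sum_congr rfl fun x _ => hfib x, ← Finset.sum_filter, hXalt,
      Finset.sum_const, smul_eq_mul]
  -- character computations
  have hχab : quadraticChar F (a * b) = 1 := by
    apply (quadraticChar_one_iff_isSquare hab).mpr
    refine ⟨c * 2⁻¹, ?_⟩
    field_simp
    linear_combination -hc2
  have hXcard : (X.card : ℤ) = 1 + quadraticChar F (a * d) := by
    have hv : a * e⁻¹ ≠ 0 := mul_ne_zero ha (inv_ne_zero he)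
    rw [hXdef, sq_card hchar hv]
    congr 1
    have harg : a * e⁻¹ = (a * d) * (a * b)⁻¹ := by
      field_simp
      linear_combination habde
    rw [harg, map_mul]
    have : quadraticChar F (a * b)⁻¹ = 1 := by
      apply (quadraticChar_one_iff_isSquare (inv_ne_zero hab)).mpr
      exact isSquare_inv.mpr ((quadraticChar_one_iff_isSquare hab).mp hχab)
    rw [this, mul_one]
  have h8 : (8 : F) ≠ 0 := by
    have h83 : (8 : F) = 2 ^ 3 := by norm_num
    rw [h83]; exact pow_ne_zero 3 h2
  have hv8 : (8 : F) * (a * d) ≠ 0 := mul_ne_zero h8 had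
  have hMcard : (M.card : ℤ) = 1 + quadraticChar F 2 * quadraticChar F (a * d) := by
    rw [hMdef, sq_card hchar hv8]
    congr 1
    have harg : (8 : F) * (a * d) = 2 * ((a * d) * (2 * 2)) := by ring
    rw [harg, map_mul, map_mul,
      (quadraticChar_one_iff_isSquare (mul_ne_zero h2 h2)).mpr ⟨2, rfl⟩, mul_one]
  have hN : ((Finset.univ.filter fun xy : F × F =>
      a * xy.2 ^ 2 + b * xy.1 ^ 2 + c * xy.1 * xy.2
        = d + e * xy.1 ^ 2 * xy.2 ^ 2 + f * xy.1 ^ 3 * xy.2).card : ℤ)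
      = (X.card : ℤ) * (Fintype.card F : ℤ) + ((Fintype.card F : ℤ) - 1)
        - (X.card : ℤ) * (M.card : ℤ) := by
    rw [hsplit]
    have hu := Finset.card_union_add_card_inter T1 T2
    have hc' : ((T1 ∪ T2).card : ℤ) = (T1.card : ℤ) + (T2.card : ℤ) - ((T1 ∩ T2).card : ℤ) := by
      have := congrArg (Nat.cast : ℕ → ℤ) hu
      push_cast at this
      linarith
    rw [hc', hT2card, hcapcard]
    push_cast [hT1card]
    ring
  have hdich := quadraticChar_dichotomy had
  constructor
  · intro h8mod
    have hχ2 : quadraticChar F 2 = 1 :=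
      (quadraticChar_one_iff_isSquare h2).mpr
        (FiniteField.isSquare_two_iff.mpr ⟨by omega, by omega⟩)
    rcases hdich with h | h <;>
      rw [hN, hXcard, hMcard, hχ2, h] <;> ring
  · intro h8mod
    have hχ2 : quadraticChar F 2 = -1 := by
      apply quadraticChar_neg_one_iff_not_isSquare.mpr
      rw [FiniteField.isSquare_two_iff]
      push_neg
      intro _
      omega
    rcases hdich with h | h <;>
      rw [hN, hXcard, hMcard, hχ2, h] <;> ring
end

section
/- Let p be an odd prime and q = p^r with r ≥ 1 be such that q ≡ 1 (mod 4). Then the number of pairs (x,y) ∈ F_q × F_q satisfying x² + y² − 2xy = 1 + x²y² − 2x³y equals 3q − 5 if q ≡ 1 (mod 8), and equals 3q − 1 if q ≡ 5 (mod 8). -/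
open Finset

lemma fiber_card {F : Type} [Fintype F] [DecidableEq F] (P : F → F → Prop)
    [∀ x y, Decidable (P x y)] :
    (Finset.univ.filter fun xy : F × F => P xy.1 xy.2).card
      = ∑ x : F, (Finset.univ.filter fun y => P x y).card := by
  rw [Finset.card_eq_sum_card_fiberwise (f := Prod.fst) (t := Finset.univ)
    (fun xy _ => Finset.mem_univ _)]
  refine Finset.sum_congr rfl fun x _ => ?_
  refine Finset.card_nbij' Prod.snd (fun y => (x, y)) ?_ ?_ ?_ ?_
  · rintro ⟨a, b⟩ ha
    simp only [Finset.mem_coe, Finset.mem_filter, Finset.mem_univ, true_and] at ha ⊢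
    exact ha.2 ▸ ha.1
  · intro y hy
    simp only [Finset.mem_coe, Finset.mem_filter, Finset.mem_univ, true_and] at hy ⊢
    exact ⟨hy, trivial⟩
  · rintro ⟨a, b⟩ ha
    simp only [Finset.mem_coe, Finset.mem_filter, Finset.mem_univ, true_and] at ha
    simp [ha.2]
  · intro y hy; rfl

lemma hyperbola_card {F : Type} [Field F] [Fintype F] [DecidableEq F]
    (h2 : (2 : F) ≠ 0) :
    (Finset.univ.filter fun xt : F × F => xt.2 ^ 2 = 1 + xt.1 ^ 2).card
      = Fintype.card F - 1 := by
  have : (Finset.univ.filter fun xt : F × F => xt.2 ^ 2 = 1 + xt.1 ^ 2).card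
      = (Finset.univ.filter fun u : F => u ≠ 0).card := by
    refine Finset.card_nbij' (fun xt => xt.2 + xt.1)
      (fun u => ((u - u⁻¹) / 2, (u + u⁻¹) / 2)) ?_ ?_ ?_ ?_
    · rintro ⟨x, t⟩ ht
      simp only [Finset.mem_coe, Finset.mem_filter, Finset.mem_univ, true_and] at ht ⊢
      intro h0
      have : (t + x) * (t - x) = 1 := by linear_combination ht
      rw [h0, zero_mul] at this
      exact one_ne_zero this.symm
    · intro u hu
      simp only [Finset.mem_coe, Finset.mem_filter, Finset.mem_univ, true_and] at hu ⊢
      field_simp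
      ring
    · rintro ⟨x, t⟩ ht
      simp only [Finset.mem_coe, Finset.mem_filter, Finset.mem_univ, true_and] at ht
      have hmul : (t + x) * (t - x) = 1 := by linear_combination ht
      have hinv : (t + x)⁻¹ = t - x := inv_eq_of_mul_eq_one_right hmul
      show ((t + x - (t + x)⁻¹) / 2, (t + x + (t + x)⁻¹) / 2) = (x, t)
      rw [hinv]
      refine Prod.ext ?_ ?_ <;> · show _ = _; field_simp; ring
    · intro u hu
      simp only [Finset.mem_coe, Finset.mem_filter, Finset.mem_univ, true_and] at hu
      field_simp
      ring
  rw [this, Finset.filter_ne' Finset.univ 0, Finset.card_erase_of_mem (Finset.mem_univ 0),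
    Finset.card_univ]

set_option maxHeartbeats 1000000 in
/-- Suppose `q ≡ 1 (mod 4)`. Then the number of `(x,y) ∈ F_q × F_q` with
`x² + y² − 2xy = 1 + x²y² − 2x³y` equals `3q−5` if `q ≡ 1 (mod 8)` and `3q−1` if
`q ≡ 5 (mod 8)`. -/
theorem statement7 (p r : ℕ) (hp : p.Prime) (hodd : Odd p) (hr : 0 < r)
    (F : Type) [Field F] [Fintype F] [DecidableEq F]
    (hcard : Fintype.card F = p ^ r) (hq4 : Fintype.card F % 4 = 1) :
    (Fintype.card F % 8 = 1 →
      ((Finset.univ.filter fun xy : F × F =>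
          xy.1 ^ 2 + xy.2 ^ 2 - 2 * xy.1 * xy.2
            = 1 + xy.1 ^ 2 * xy.2 ^ 2 - 2 * xy.1 ^ 3 * xy.2).card : ℤ)
        = 3 * (Fintype.card F : ℤ) - 5)
    ∧ (Fintype.card F % 8 = 5 →
      ((Finset.univ.filter fun xy : F × F =>
          xy.1 ^ 2 + xy.2 ^ 2 - 2 * xy.1 * xy.2
            = 1 + xy.1 ^ 2 * xy.2 ^ 2 - 2 * xy.1 ^ 3 * xy.2).card : ℤ)
        = 3 * (Fintype.card F : ℤ) - 1) := by
  have hchar : ringChar F ≠ 2 := by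
    intro h
    haveI : CharP F 2 := h ▸ ringChar.charP F
    obtain ⟨n, -, hn⟩ := FiniteField.card F 2
    have h2 : (2:ℕ) ∣ Fintype.card F := hn ▸ dvd_pow_self 2 n.pos.ne'
    omega
  have h2F : (2 : F) ≠ 0 := Ring.two_ne_zero hchar
  have hone : (1 : F) ≠ -1 := fun h => h2F (by linear_combination h)
  have key : ((Finset.univ.filter fun xy : F × F =>
      xy.1 ^ 2 + xy.2 ^ 2 - 2 * xy.1 * xy.2
        = 1 + xy.1 ^ 2 * xy.2 ^ 2 - 2 * xy.1 ^ 3 * xy.2).card : ℤ)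
      = 3 * (Fintype.card F : ℤ) - 3 - 2 * quadraticChar F 2 := by
    have hiff : ∀ xy : F × F,
        (xy.1 ^ 2 + xy.2 ^ 2 - 2 * xy.1 * xy.2
          = 1 + xy.1 ^ 2 * xy.2 ^ 2 - 2 * xy.1 ^ 3 * xy.2)
        ↔ ((xy.1 - xy.2) ^ 2 = 1 + xy.1 ^ 2 ∨ xy.1 ^ 2 = 1) := by
      rintro ⟨x, y⟩
      constructor
      · intro h
        by_cases hx : x ^ 2 = 1
        · exact Or.inr hx
        · left
          have hne : (1 : F) - x ^ 2 ≠ 0 := fun h0 => hx (by linear_combination -h0)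
          apply mul_left_cancel₀ hne
          linear_combination h
      · rintro (h | h)
        · linear_combination (1 - x ^ 2) * h
        · linear_combination ((1 + x ^ 2) - (x - y) ^ 2) * h
    have hfc1 : (Finset.univ.filter fun xy : F × F =>
        (xy.1 - xy.2) ^ 2 = 1 + xy.1 ^ 2 ∨ xy.1 ^ 2 = 1).card
        = ∑ x : F, (Finset.univ.filter fun y : F =>
            (x - y) ^ 2 = 1 + x ^ 2 ∨ x ^ 2 = 1).card :=
      fiber_card (fun x y : F => (x - y) ^ 2 = 1 + x ^ 2 ∨ x ^ 2 = 1)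
    rw [Finset.filter_congr (fun xy _ => hiff xy), hfc1]
    push_cast
    have hinner : ∀ x : F,
        ((Finset.univ.filter fun y : F => (x - y) ^ 2 = 1 + x ^ 2 ∨ x ^ 2 = 1).card : ℤ)
          = if x ^ 2 = 1 then (Fintype.card F : ℤ)
            else quadraticChar F (1 + x ^ 2) + 1 := by
      intro x
      by_cases hx : x ^ 2 = 1
      · rw [if_pos hx, Finset.filter_true_of_mem (fun y _ => Or.inr hx), Finset.card_univ]
      · rw [if_neg hx,
          Finset.filter_congr (q := fun y : F => (x - y) ^ 2 = 1 + x ^ 2)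
            (fun y _ => by simp [hx])]
        have : (Finset.univ.filter fun y : F => (x - y) ^ 2 = 1 + x ^ 2).card
            = (Finset.univ.filter fun t : F => t ^ 2 = 1 + x ^ 2).card := by
          refine Finset.card_nbij' (fun y => x - y) (fun t => x - t) ?_ ?_ ?_ ?_ <;>
            intro a ha <;> simp_all <;> ring
        have hqc := quadraticChar_card_sqrts hchar (1 + x ^ 2)
        rw [Set.toFinset_setOf] at hqc
        rw [this]
        exact_mod_cast hqc
    rw [Finset.sum_congr rfl (fun x _ => hinner x), Finset.sum_ite]
    have hfil : (Finset.univ.filter fun x : F => x ^ 2 = 1) = {1, -1} := by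
      ext x
      simp only [Finset.mem_filter, Finset.mem_univ, true_and, Finset.mem_insert,
        Finset.mem_singleton]
      constructor
      · intro h
        have : (x - 1) * (x + 1) = 0 := by linear_combination h
        rcases mul_eq_zero.mp this with h' | h'
        · exact Or.inl (by linear_combination h')
        · exact Or.inr (by linear_combination h')
      · rintro (rfl | rfl) <;> ring
    have hsum1 : (∑ _x ∈ Finset.univ.filter fun x : F => x ^ 2 = 1,
        (Fintype.card F : ℤ)) = 2 * (Fintype.card F : ℤ) := by
      rw [Finset.sum_const, hfil, Finset.card_pair hone]
      push_cast; ring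
    have hH : (∑ x : F, ((quadraticChar F (1 + x ^ 2) : ℤ) + 1))
        = (Fintype.card F : ℤ) - 1 := by
      have hterm : ∀ x : F, ((quadraticChar F (1 + x ^ 2) : ℤ) + 1)
          = ((Finset.univ.filter fun t : F => t ^ 2 = 1 + x ^ 2).card : ℤ) := by
        intro x
        have hqc := quadraticChar_card_sqrts hchar (1 + x ^ 2)
        rw [Set.toFinset_setOf] at hqc
        exact_mod_cast hqc.symm
      have hfc2 : (Finset.univ.filter fun xt : F × F =>
          xt.2 ^ 2 = 1 + xt.1 ^ 2).card
          = ∑ x : F, (Finset.univ.filter fun t : F => t ^ 2 = 1 + x ^ 2).card :=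
        fiber_card (fun x t : F => t ^ 2 = 1 + x ^ 2)
      rw [Finset.sum_congr rfl (fun x _ => hterm x), ← Nat.cast_sum,
        ← hfc2, hyperbola_card h2F]
      have : 1 ≤ Fintype.card F := Fintype.card_pos
      push_cast [Nat.cast_sub this]
      ring
    have hsplit : (∑ x ∈ Finset.univ.filter fun x : F => ¬ x ^ 2 = 1,
          ((quadraticChar F (1 + x ^ 2) : ℤ) + 1))
        = (Fintype.card F : ℤ) - 1 - 2 * (quadraticChar F 2 + 1) := by
      have := Finset.sum_filter_add_sum_filter_not Finset.univ
        (fun x : F => x ^ 2 = 1) (fun x : F => ((quadraticChar F (1 + x ^ 2) : ℤ) + 1))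
      have hpart : (∑ x ∈ Finset.univ.filter fun x : F => x ^ 2 = 1,
          ((quadraticChar F (1 + x ^ 2) : ℤ) + 1)) = 2 * (quadraticChar F 2 + 1) := by
        rw [hfil, Finset.sum_pair hone]
        norm_num
        ring
      rw [hH] at this
      linarith [hpart, this]
    rw [hsum1, hsplit]
    ring
  constructor <;> intro h8 <;> rw [key, quadraticChar_two hchar]
  · have : ZMod.χ₈ (Fintype.card F : ZMod 8) = 1 := by
      rw [ZMod.χ₈_nat_mod_eight, h8]; decide
    rw [this]; ring
  · have : ZMod.χ₈ (Fintype.card F : ZMod 8) = -1 := by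
      rw [ZMod.χ₈_nat_mod_eight, h8]; decide
    rw [this]; ring
end
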